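/- arXiv:2507.18066 — 2 statements merged into one kernel-verified Lean document; each statement's English description precedes it below -/
import Mathlib

section
/- Let Ŝ be the CHSH operator for the fixed observables A₀ = σx, A₁ = σz, B₀ = (σx+σz)/√2, B₁ = (σx−σz)/√2, and S(ρ) = Tr(ρŜ). If ρ is a 4×4 positive semidefinite matrix with trace 1 and S(ρ) = 2√2, then ρ = |Φ⁺⟩⟨Φ⁺|. In other words, the EPR state |Φ⁺⟩⟨Φ⁺| is the unique global maximizer of S over the set of two-qubit density matrices. -/
/-!
Since `Ŝ = √2 (σx ⊗ σx + σz ⊗ σz) = 2√2 (|Φ⁺⟩⟨Φ⁺| - |Ψ⁻⟩⟨Ψ⁻|)`, we have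
`S(ρ) = 2√2 (⟨Φ⁺|ρ|Φ⁺⟩ - ⟨Ψ⁻|ρ|Ψ⁻⟩) ≤ 2√2 ⟨Φ⁺|ρ|Φ⁺⟩ ≤ 2√2 Tr ρ`.
For a unit vector `v` with projection `P = |v⟩⟨v|` and `Q = 1 - P`, the gap
`Tr ρ - ⟨v|ρ|v⟩ = Tr (Q ρ Q)` is the trace of a positive semidefinite matrix, so equality
forces `Q ρ Q = 0`, hence `ρ Q = 0` and `ρ = P ρ P = ⟨v|ρ|v⟩ P`.
-/

open Matrix Kronecker Complex ComplexOrder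

noncomputable section

/-- Pauli X matrix. -/
def sigX : Matrix (Fin 2) (Fin 2) ℂ := !![0, 1; 1, 0]

/-- Pauli Z matrix. -/
def sigZ : Matrix (Fin 2) (Fin 2) ℂ := !![1, 0; 0, -1]

/-- Bob's observable `B₀ = (σx + σz)/√2`. -/
def Bob0 : Matrix (Fin 2) (Fin 2) ℂ := ((Real.sqrt 2 : ℂ))⁻¹ • (sigX + sigZ)

/-- Bob's observable `B₁ = (σx − σz)/√2`. -/
def Bob1 : Matrix (Fin 2) (Fin 2) ℂ := ((Real.sqrt 2 : ℂ))⁻¹ • (sigX - sigZ)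

/-- The CHSH operator `Ŝ = A₀⊗B₀ + A₁⊗B₀ + A₀⊗B₁ − A₁⊗B₁` with `A₀ = σx`, `A₁ = σz`. -/
def Shat : Matrix (Fin 2 × Fin 2) (Fin 2 × Fin 2) ℂ :=
  sigX ⊗ₖ Bob0 + sigZ ⊗ₖ Bob0 + sigX ⊗ₖ Bob1 - sigZ ⊗ₖ Bob1

/-- Bell state `|Φ⁺⟩ = (|00⟩ + |11⟩)/√2`. -/
def phiPlus : Fin 2 × Fin 2 → ℂ :=
  fun p => if p = (0, 0) ∨ p = (1, 1) then ((Real.sqrt 2 : ℂ))⁻¹ else 0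

/-- Bell state `|Ψ⁻⟩ = (|01⟩ − |10⟩)/√2`. -/
def psiMinus : Fin 2 × Fin 2 → ℂ :=
  fun p => if p = (0, 1) then ((Real.sqrt 2 : ℂ))⁻¹
    else if p = (1, 0) then -((Real.sqrt 2 : ℂ))⁻¹ else 0

/-- CHSH measure `S(ρ) = Tr(ρ Ŝ)` (a real number for Hermitian ρ). -/
def Smeas (ρ : Matrix (Fin 2 × Fin 2) (Fin 2 × Fin 2) ℂ) : ℝ :=
  ((ρ * Shat).trace).re

/-- Entanglement fidelity `F(ρ) = ⟨Φ⁺|ρ|Φ⁺⟩`. -/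
def Fent (ρ : Matrix (Fin 2 × Fin 2) (Fin 2 × Fin 2) ℂ) : ℝ :=
  (star phiPlus ⬝ᵥ ρ *ᵥ phiPlus).re

end

namespace Matrix

variable {n : Type*} [Fintype n]

section StarRing

variable {α : Type*} [CommRing α] [StarRing α]

theorem trace_mul_vecMulVec_star (ρ : Matrix n n α) (v : n → α) :
    (ρ * vecMulVec v (star v)).trace = star v ⬝ᵥ ρ *ᵥ v := by
  rw [mul_vecMulVec, trace_vecMulVec, dotProduct_comm]

theorem vecMulVec_star_mul_mul_vecMulVec_star (ρ : Matrix n n α) (v : n → α) :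
    vecMulVec v (star v) * ρ * vecMulVec v (star v) =
      (star v ⬝ᵥ ρ *ᵥ v) • vecMulVec v (star v) := by
  rw [mul_vecMulVec, ← mulVec_mulVec, vecMulVec_mulVec, op_smul_eq_smul, smul_vecMulVec]

theorem trace_conjTranspose_mul_mul_one_sub_vecMulVec_star [DecidableEq n] {v : n → α}
    (hv : star v ⬝ᵥ v = 1) (ρ : Matrix n n α) :
    ((1 - vecMulVec v (star v))ᴴ * ρ * (1 - vecMulVec v (star v))).trace =
      ρ.trace - star v ⬝ᵥ ρ *ᵥ v := by
  set P := vecMulVec v (star v)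
  have hPP : P * P = P := by rw [vecMulVec_mul_vecMulVec, hv, one_smul]
  have hQQ : (1 - P) * (1 - P)ᴴ = 1 - P := by
    rw [conjTranspose_sub, conjTranspose_one, conjTranspose_vecMulVec, star_star, sub_mul,
      mul_sub, mul_sub, hPP]
    noncomm_ring
  rw [trace_mul_cycle, trace_mul_comm, hQQ, mul_sub, mul_one, trace_sub,
    trace_mul_vecMulVec_star]

end StarRing

namespace PosSemidef

variable {𝕜 : Type*} [RCLike 𝕜] {ρ : Matrix n n 𝕜}

theorem mul_eq_zero_of_trace_conjTranspose_mul_mul_eq_zero {B : Matrix n n 𝕜}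
    (hρ : ρ.PosSemidef) (h : (Bᴴ * ρ * B).trace = 0) : ρ * B = 0 := by
  have hB : Bᴴ * ρ * B = 0 := (hρ.conjTranspose_mul_mul_same B).trace_eq_zero_iff.mp h
  refine ext_iff_mulVec.mpr fun x => ?_
  rw [← mulVec_mulVec, zero_mulVec, ← hρ.dotProduct_mulVec_zero_iff]
  calc star (B *ᵥ x) ⬝ᵥ ρ *ᵥ (B *ᵥ x) = star x ⬝ᵥ (Bᴴ * ρ * B) *ᵥ x := by
        simp only [star_mulVec, dotProduct_mulVec, vecMul_vecMul]
    _ = 0 := by rw [hB, zero_mulVec, dotProduct_zero]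

variable [DecidableEq n] {v : n → 𝕜}

theorem dotProduct_mulVec_le_trace (hρ : ρ.PosSemidef) (hv : star v ⬝ᵥ v = 1) :
    star v ⬝ᵥ ρ *ᵥ v ≤ ρ.trace := by
  rw [← sub_nonneg, ← trace_conjTranspose_mul_mul_one_sub_vecMulVec_star hv]
  exact (hρ.conjTranspose_mul_mul_same _).trace_nonneg

theorem eq_trace_smul_vecMulVec_star (hρ : ρ.PosSemidef) (hv : star v ⬝ᵥ v = 1)
    (h : star v ⬝ᵥ ρ *ᵥ v = ρ.trace) : ρ = ρ.trace • vecMulVec v (star v) := by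
  set P := vecMulVec v (star v)
  have hρQ : ρ * (1 - P) = 0 := hρ.mul_eq_zero_of_trace_conjTranspose_mul_mul_eq_zero <| by
    rw [trace_conjTranspose_mul_mul_one_sub_vecMulVec_star hv, h, sub_self]
  have hρP : ρ = ρ * P := by rwa [mul_sub, mul_one, sub_eq_zero] at hρQ
  have hPρ : ρ = P * ρ := by
    have := congrArg (·ᴴ) hρP
    rwa [conjTranspose_mul, conjTranspose_vecMulVec, star_star, hρ.isHermitian.eq] at this
  calc ρ = P * ρ * P := by rw [mul_assoc, ← hρP, ← hPρ]
    _ = ρ.trace • P := by rw [vecMulVec_star_mul_mul_vecMulVec_star, h]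

end PosSemidef

end Matrix

theorem Shat_eq_smul_vecMulVec_sub_vecMulVec : Shat = (2 * Real.sqrt 2 : ℂ) •
    (vecMulVec phiPlus (star phiPlus) - vecMulVec psiMinus (star psiMinus)) := by
  have h0 : (Real.sqrt 2 : ℂ) ≠ 0 := by simp
  ext ⟨i, j⟩ ⟨k, l⟩
  fin_cases i <;> fin_cases j <;> fin_cases k <;> fin_cases l <;>
    simp [Shat, Bob0, Bob1, sigX, sigZ, phiPlus, psiMinus, vecMulVec_apply] <;>
    field_simp <;> norm_num

theorem star_phiPlus_dotProduct_phiPlus : star phiPlus ⬝ᵥ phiPlus = 1 := by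
  have h : ((Real.sqrt 2 : ℂ))⁻¹ * ((Real.sqrt 2 : ℂ))⁻¹ = 2⁻¹ := by
    rw [← mul_inv, ← Complex.ofReal_mul, Real.mul_self_sqrt zero_le_two, Complex.ofReal_ofNat]
  norm_num [dotProduct, Fintype.sum_prod_type, phiPlus, h]

theorem Smeas_eq_mul_Fent_sub (ρ : Matrix (Fin 2 × Fin 2) (Fin 2 × Fin 2) ℂ) :
    Smeas ρ = 2 * Real.sqrt 2 * (Fent ρ - (star psiMinus ⬝ᵥ ρ *ᵥ psiMinus).re) := by
  rw [Smeas, Fent, Shat_eq_smul_vecMulVec_sub_vecMulVec, mul_smul_comm, trace_smul, mul_sub,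
    trace_sub, trace_mul_vecMulVec_star, trace_mul_vecMulVec_star, smul_eq_mul,
    ← Complex.ofReal_ofNat, ← Complex.ofReal_mul, Complex.re_ofReal_mul, Complex.sub_re]

/-- The EPR state `|Φ⁺⟩⟨Φ⁺|` is the unique global maximizer of the CHSH measure:
if a two-qubit density matrix attains `S(ρ) = 2√2` then `ρ = |Φ⁺⟩⟨Φ⁺|`. -/
theorem unique_maximizer_of_chsh (ρ : Matrix (Fin 2 × Fin 2) (Fin 2 × Fin 2) ℂ)
    (hρ : ρ.PosSemidef) (htr : ρ.trace = 1)
    (hS : Smeas ρ = 2 * Real.sqrt 2) :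
    ρ = vecMulVec phiPlus (star phiPlus) := by
  have hΦ := Complex.le_def.mp (hρ.dotProduct_mulVec_le_trace star_phiPlus_dotProduct_phiPlus)
  have hΨ : 0 ≤ (star psiMinus ⬝ᵥ ρ *ᵥ psiMinus).re := hρ.re_dotProduct_nonneg psiMinus
  have hF : Fent ρ - (star psiMinus ⬝ᵥ ρ *ᵥ psiMinus).re = 1 := by
    rw [Smeas_eq_mul_Fent_sub] at hS
    exact mul_left_cancel₀ (by positivity) (hS.trans (mul_one _).symm)
  have hmax : star phiPlus ⬝ᵥ ρ *ᵥ phiPlus = ρ.trace := by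
    refine Complex.ext (hΦ.1.antisymm ?_) hΦ.2
    rw [htr, Complex.one_re]
    change 1 ≤ Fent ρ
    linarith
  simpa [htr] using hρ.eq_trace_smul_vecMulVec_star star_phiPlus_dotProduct_phiPlus hmax
end

section
/- Let Ŝ be the CHSH operator for the fixed observables A₀ = σx, A₁ = σz, B₀ = (σx+σz)/√2, B₁ = (σx−σz)/√2, let ρ be a 4×4 positive semidefinite matrix with trace 1, and let S(ρ) = Tr(ρŜ) and F(ρ) = ⟨Φ⁺|ρ|Φ⁺⟩. For any α ∈ (0, 1/3): (i) if F(ρ) ≤ 1 − 3α then S(ρ) ≤ 2√2 − 6√2·α; and (ii) if F(ρ) ≥ 1 − α then S(ρ) ≥ 2√2 − 4√2·α. -/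
/-!
In the Bell basis the CHSH operator is `Ŝ = 2√2 (|Φ⁺⟩⟨Φ⁺| − |Ψ⁻⟩⟨Ψ⁻|)`, so
`S(ρ) = 2√2 (F(ρ) − G(ρ))` with `G(ρ) = ⟨Ψ⁻|ρ|Ψ⁻⟩`. Positivity of `ρ` gives `G ≥ 0`, and, since the
four Bell overlaps add up to `Tr ρ = 1`, also `G ≤ 1 − F`. Hence `S/(2√2) ≤ F ≤ S/(4√2) + 1/2`,
and both implications are linear consequences of these two bounds.
-/

open Matrix Kronecker Complex ComplexOrder

noncomputable def phiMinus : Fin 2 × Fin 2 → ℂ :=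
  fun p => if p = (0, 0) then ((Real.sqrt 2 : ℂ))⁻¹
    else if p = (1, 1) then -((Real.sqrt 2 : ℂ))⁻¹ else 0

noncomputable def psiPlus : Fin 2 × Fin 2 → ℂ :=
  fun p => if p = (0, 1) ∨ p = (1, 0) then ((Real.sqrt 2 : ℂ))⁻¹ else 0

lemma inv_sqrt_two_sq : ((Real.sqrt 2 : ℂ))⁻¹ ^ 2 = 1 / 2 := by
  rw [inv_pow, ← Complex.ofReal_pow, Real.sq_sqrt zero_le_two]
  norm_num

lemma two_mul_inv_sqrt_two : 2 * ((Real.sqrt 2 : ℂ))⁻¹ = Real.sqrt 2 := by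
  have h : (Real.sqrt 2 : ℂ) ≠ 0 := by simp
  field_simp
  rw [sq, ← Complex.ofReal_mul, Real.mul_self_sqrt zero_le_two]
  norm_num

section BellOverlaps

variable (ρ : Matrix (Fin 2 × Fin 2) (Fin 2 × Fin 2) ℂ)

lemma phiPlus_dotProduct_mulVec :
    star phiPlus ⬝ᵥ ρ *ᵥ phiPlus =
      (ρ (0, 0) (0, 0) + ρ (0, 0) (1, 1) + ρ (1, 1) (0, 0) + ρ (1, 1) (1, 1)) / 2 := by
  simp [phiPlus, dotProduct, mulVec, Fintype.sum_prod_type]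
  linear_combination
    (ρ (0, 0) (0, 0) + ρ (0, 0) (1, 1) + ρ (1, 1) (0, 0) + ρ (1, 1) (1, 1)) * inv_sqrt_two_sq

lemma phiMinus_dotProduct_mulVec :
    star phiMinus ⬝ᵥ ρ *ᵥ phiMinus =
      (ρ (0, 0) (0, 0) - ρ (0, 0) (1, 1) - ρ (1, 1) (0, 0) + ρ (1, 1) (1, 1)) / 2 := by
  simp [phiMinus, dotProduct, mulVec, Fintype.sum_prod_type]
  linear_combination
    (ρ (0, 0) (0, 0) - ρ (0, 0) (1, 1) - ρ (1, 1) (0, 0) + ρ (1, 1) (1, 1)) * inv_sqrt_two_sq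

lemma psiPlus_dotProduct_mulVec :
    star psiPlus ⬝ᵥ ρ *ᵥ psiPlus =
      (ρ (0, 1) (0, 1) + ρ (0, 1) (1, 0) + ρ (1, 0) (0, 1) + ρ (1, 0) (1, 0)) / 2 := by
  simp [psiPlus, dotProduct, mulVec, Fintype.sum_prod_type]
  linear_combination
    (ρ (0, 1) (0, 1) + ρ (0, 1) (1, 0) + ρ (1, 0) (0, 1) + ρ (1, 0) (1, 0)) * inv_sqrt_two_sq

lemma psiMinus_dotProduct_mulVec :
    star psiMinus ⬝ᵥ ρ *ᵥ psiMinus =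
      (ρ (0, 1) (0, 1) - ρ (0, 1) (1, 0) - ρ (1, 0) (0, 1) + ρ (1, 0) (1, 0)) / 2 := by
  simp [psiMinus, dotProduct, mulVec, Fintype.sum_prod_type]
  linear_combination
    (ρ (0, 1) (0, 1) - ρ (0, 1) (1, 0) - ρ (1, 0) (0, 1) + ρ (1, 0) (1, 0)) * inv_sqrt_two_sq

lemma sum_bell_dotProduct_mulVec_eq_trace :
    star phiPlus ⬝ᵥ ρ *ᵥ phiPlus + star phiMinus ⬝ᵥ ρ *ᵥ phiMinus +
      star psiPlus ⬝ᵥ ρ *ᵥ psiPlus + star psiMinus ⬝ᵥ ρ *ᵥ psiMinus = ρ.trace := by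
  rw [phiPlus_dotProduct_mulVec, phiMinus_dotProduct_mulVec, psiPlus_dotProduct_mulVec,
    psiMinus_dotProduct_mulVec]
  simp [trace, Fintype.sum_prod_type]
  ring

lemma trace_mul_Shat :
    (ρ * Shat).trace = 2 * Real.sqrt 2 *
      (star phiPlus ⬝ᵥ ρ *ᵥ phiPlus - star psiMinus ⬝ᵥ ρ *ᵥ psiMinus) := by
  rw [phiPlus_dotProduct_mulVec, psiMinus_dotProduct_mulVec]
  simp [Shat, Bob0, Bob1, sigX, sigZ, trace, mul_apply, Fintype.sum_prod_type]
  linear_combination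
    (ρ (0, 0) (0, 0) + ρ (0, 0) (1, 1) + ρ (1, 1) (0, 0) + ρ (1, 1) (1, 1) - ρ (0, 1) (0, 1)
      + ρ (0, 1) (1, 0) + ρ (1, 0) (0, 1) - ρ (1, 0) (1, 0)) * two_mul_inv_sqrt_two

lemma Smeas_eq :
    Smeas ρ = 2 * Real.sqrt 2 * (Fent ρ - (star psiMinus ⬝ᵥ ρ *ᵥ psiMinus).re) := by
  rw [Smeas, trace_mul_Shat, Fent, ← Complex.ofReal_ofNat, ← Complex.ofReal_mul,
    Complex.re_ofReal_mul, Complex.sub_re]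

end BellOverlaps

section PosSemidef

variable {ρ : Matrix (Fin 2 × Fin 2) (Fin 2 × Fin 2) ℂ} (hρ : ρ.PosSemidef)
include hρ

lemma Smeas_le_two_sqrt_two_mul_Fent : Smeas ρ ≤ 2 * Real.sqrt 2 * Fent ρ := by
  rw [Smeas_eq]
  have : 0 ≤ (star psiMinus ⬝ᵥ ρ *ᵥ psiMinus).re := hρ.re_dotProduct_nonneg psiMinus
  exact mul_le_mul_of_nonneg_left (sub_le_self _ this) (by positivity)

lemma Fent_add_psiMinus_le_one (htr : ρ.trace = 1) :
    Fent ρ + (star psiMinus ⬝ᵥ ρ *ᵥ psiMinus).re ≤ 1 := by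
  have hsum := congrArg Complex.re (sum_bell_dotProduct_mulVec_eq_trace ρ)
  rw [htr] at hsum
  simp only [Complex.add_re, Complex.one_re] at hsum
  have : 0 ≤ (star phiMinus ⬝ᵥ ρ *ᵥ phiMinus).re := hρ.re_dotProduct_nonneg phiMinus
  have : 0 ≤ (star psiPlus ⬝ᵥ ρ *ᵥ psiPlus).re := hρ.re_dotProduct_nonneg psiPlus
  rw [Fent]
  linarith

lemma two_sqrt_two_mul_two_mul_Fent_sub_one_le_Smeas (htr : ρ.trace = 1) :
    2 * Real.sqrt 2 * (2 * Fent ρ - 1) ≤ Smeas ρ := by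
  rw [Smeas_eq]
  have := Fent_add_psiMinus_le_one hρ htr
  exact mul_le_mul_of_nonneg_left (by linarith) (by positivity)

end PosSemidef

theorem fidelity_hypotheses_to_chsh_general (ρ : Matrix (Fin 2 × Fin 2) (Fin 2 × Fin 2) ℂ)
    (hρ : ρ.PosSemidef) (htr : ρ.trace = 1)
    (α : ℝ) :
    (Fent ρ ≤ 1 - 3 * α → Smeas ρ ≤ 2 * Real.sqrt 2 - 6 * Real.sqrt 2 * α) ∧
    (Fent ρ ≥ 1 - α → Smeas ρ ≥ 2 * Real.sqrt 2 - 4 * Real.sqrt 2 * α) := by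
  constructor
  · intro hF
    calc Smeas ρ ≤ 2 * Real.sqrt 2 * Fent ρ := Smeas_le_two_sqrt_two_mul_Fent hρ
      _ ≤ 2 * Real.sqrt 2 * (1 - 3 * α) := by gcongr
      _ = 2 * Real.sqrt 2 - 6 * Real.sqrt 2 * α := by ring
  · intro hF
    calc 2 * Real.sqrt 2 - 4 * Real.sqrt 2 * α = 2 * Real.sqrt 2 * (2 * (1 - α) - 1) := by ring
      _ ≤ 2 * Real.sqrt 2 * (2 * Fent ρ - 1) := by gcongr
      _ ≤ Smeas ρ := two_sqrt_two_mul_two_mul_Fent_sub_one_le_Smeas hρ htr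

/-- Hypothesis-to-CHSH translations: for `α ∈ (0, 1/3)`, if `F(ρ) ≤ 1 − 3α` then
`S(ρ) ≤ 2√2 − 6√2·α`, and if `F(ρ) ≥ 1 − α` then `S(ρ) ≥ 2√2 − 4√2·α`. -/
theorem fidelity_hypotheses_to_chsh (ρ : Matrix (Fin 2 × Fin 2) (Fin 2 × Fin 2) ℂ)
    (hρ : ρ.PosSemidef) (htr : ρ.trace = 1)
    (α : ℝ) (hα : 0 < α) (hα' : α < 1 / 3) :
    (Fent ρ ≤ 1 - 3 * α → Smeas ρ ≤ 2 * Real.sqrt 2 - 6 * Real.sqrt 2 * α) ∧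
    (Fent ρ ≥ 1 - α → Smeas ρ ≥ 2 * Real.sqrt 2 - 4 * Real.sqrt 2 * α) :=
  fidelity_hypotheses_to_chsh_general ρ hρ htr α
end
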